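/- arXiv:1301.4786 — 2 statements merged into one kernel-verified Lean document; each statement's English description precedes it below -/
import Mathlib

section
/- (Optimality of the modified greedy policy when BS 1 is always in surplus and BS 2 always in deficit.) Suppose 0 < α ≤ 1, 0 < β ≤ 1, E₁(t) ≥ 0 and E₂(t) ≤ 0 for all t ∈ {k,…,N}. Then for every state (σ₁,σ₂) ∈ [0,S_max]², there exists a one-step feasible action at (σ₁,σ₂) with net energies (E₁(k),E₂(k)) whose grid draw w₁+w₂ equals the one-step minimum V₁(σ₁,σ₂,E₁(k),E₂(k)) and whose next state (σ₁',σ₂') satisfies J*_k(σ₁,σ₂) = V₁(σ₁,σ₂,E₁(k),E₂(k)) + J*_{k+1}(σ₁',σ₂'), where J*_{k+1} denotes the optimal cost of the problem over slots {k+1,…,N} (taken to be 0 when k = N). -/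
/-- A feasible policy for the two-base-station energy cooperation problem over
slots `t ∈ {k, …, N}` from initial storage state `(σ₁, σ₂)`. -/
def Feasible (α β Smax : ℝ) (k N : ℕ) (E₁ E₂ : ℕ → ℝ) (σ₁ σ₂ : ℝ)
    (w₁ w₂ c₁ c₂ d₁ d₂ x₁₂ x₂₁ s₁ s₂ : ℕ → ℝ) : Prop :=
  s₁ k = σ₁ ∧ s₂ k = σ₂ ∧
  (∀ t ∈ Finset.Icc k N,
    0 ≤ w₁ t ∧ 0 ≤ w₂ t ∧ 0 ≤ c₁ t ∧ 0 ≤ c₂ t ∧ 0 ≤ d₁ t ∧ 0 ≤ d₂ t ∧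
      0 ≤ x₁₂ t ∧ 0 ≤ x₂₁ t ∧
      s₁ (t + 1) = s₁ t + α * c₁ t - d₁ t ∧
      s₂ (t + 1) = s₂ t + α * c₂ t - d₂ t ∧
      d₁ t ≤ s₁ t ∧ d₂ t ≤ s₂ t ∧
      0 ≤ E₁ t + w₁ t - c₁ t + α * d₁ t - x₁₂ t + β * x₂₁ t ∧
      0 ≤ E₂ t + w₂ t - c₂ t + α * d₂ t - x₂₁ t + β * x₁₂ t) ∧
  (∀ t ∈ Finset.Icc k (N + 1),
    0 ≤ s₁ t ∧ s₁ t ≤ Smax ∧ 0 ≤ s₂ t ∧ s₂ t ≤ Smax)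

/-- Optimal cost `J*_k(σ₁, σ₂)`: the infimum of total grid draw over feasible policies. -/
noncomputable def Jstar (α β Smax : ℝ) (k N : ℕ) (E₁ E₂ : ℕ → ℝ) (σ₁ σ₂ : ℝ) : ℝ :=
  sInf {r : ℝ | ∃ w₁ w₂ c₁ c₂ d₁ d₂ x₁₂ x₂₁ s₁ s₂ : ℕ → ℝ,
    Feasible α β Smax k N E₁ E₂ σ₁ σ₂ w₁ w₂ c₁ c₂ d₁ d₂ x₁₂ x₂₁ s₁ s₂ ∧
    (∑ t ∈ Finset.Icc k N, (w₁ t + w₂ t)) = r}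

/-- A one-step feasible action at state `(s₁, s₂)` with net energies `(E₁, E₂)`. -/
def OneStep (α β Smax s₁ s₂ E₁ E₂ w₁ w₂ c₁ c₂ d₁ d₂ x₁₂ x₂₁ : ℝ) : Prop :=
  0 ≤ w₁ ∧ 0 ≤ w₂ ∧ 0 ≤ c₁ ∧ 0 ≤ c₂ ∧ 0 ≤ d₁ ∧ 0 ≤ d₂ ∧ 0 ≤ x₁₂ ∧ 0 ≤ x₂₁ ∧
  d₁ ≤ s₁ ∧ d₂ ≤ s₂ ∧
  0 ≤ s₁ + α * c₁ - d₁ ∧ s₁ + α * c₁ - d₁ ≤ Smax ∧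
  0 ≤ s₂ + α * c₂ - d₂ ∧ s₂ + α * c₂ - d₂ ≤ Smax ∧
  0 ≤ E₁ + w₁ - c₁ + α * d₁ - x₁₂ + β * x₂₁ ∧
  0 ≤ E₂ + w₂ - c₂ + α * d₂ - x₂₁ + β * x₁₂

/-- One-step minimal grid draw `V₁(s₁, s₂, E₁, E₂)`. -/
noncomputable def V1 (α β Smax s₁ s₂ E₁ E₂ : ℝ) : ℝ :=
  sInf {r : ℝ | ∃ w₁ w₂ c₁ c₂ d₁ d₂ x₁₂ x₂₁ : ℝ,
    OneStep α β Smax s₁ s₂ E₁ E₂ w₁ w₂ c₁ c₂ d₁ d₂ x₁₂ x₂₁ ∧ w₁ + w₂ = r}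

/-
When BS 1 is always in surplus and BS 2 always in deficit, a storage state `(s₁, s₂)` matters only
through the level `θ = α β s₁ + α s₂` of energy it can deliver to BS 2, and a slot only through
its net energy `C = β E₁ + E₂` seen from BS 2. The modified greedy policy serves a deficit from
storage and stores a surplus; its cost `G_t` satisfies
`G_t θ = max 0 (-(θ + C_t)) + G_{t+1} (n_t θ)`, and by induction `G_t` is antitone and
`1`-Lipschitz. Any feasible action draws at least `max 0 (-(θ + C))`, and at least that plus the
excess `θ' - n_t θ` of its next level `θ'` over the greedy one, so it cannot beat the greedy step
followed by `G_{t+1}`. Backward induction through the Bellman recursion then gives `J*_t = G_t ∘ θ`,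
and the greedy action attains both `V₁` and the recursion at slot `k`.
-/

open Finset Function

theorem OneStep.next_bounds {α β Smax σ₁ σ₂ E₁ E₂ w₁ w₂ c₁ c₂ d₁ d₂ x₁₂ x₂₁ : ℝ}
    (h : OneStep α β Smax σ₁ σ₂ E₁ E₂ w₁ w₂ c₁ c₂ d₁ d₂ x₁₂ x₂₁) :
    (0 ≤ σ₁ + α * c₁ - d₁ ∧ σ₁ + α * c₁ - d₁ ≤ Smax) ∧
      (0 ≤ σ₂ + α * c₂ - d₂ ∧ σ₂ + α * c₂ - d₂ ≤ Smax) := by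
  obtain ⟨-, -, -, -, -, -, -, -, -, -, h₁₀, h₁S, h₂₀, h₂S, -, -⟩ := h
  exact ⟨⟨h₁₀, h₁S⟩, h₂₀, h₂S⟩

section Bellman

variable {α β Smax : ℝ} {k N : ℕ} {E₁ E₂ : ℕ → ℝ} {σ₁ σ₂ : ℝ}

def policyCosts (α β Smax : ℝ) (k N : ℕ) (E₁ E₂ : ℕ → ℝ) (σ₁ σ₂ : ℝ) : Set ℝ :=
  {r : ℝ | ∃ w₁ w₂ c₁ c₂ d₁ d₂ x₁₂ x₂₁ s₁ s₂ : ℕ → ℝ,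
    Feasible α β Smax k N E₁ E₂ σ₁ σ₂ w₁ w₂ c₁ c₂ d₁ d₂ x₁₂ x₂₁ s₁ s₂ ∧
    (∑ t ∈ Icc k N, (w₁ t + w₂ t)) = r}

theorem Jstar_eq_sInf_policyCosts :
    Jstar α β Smax k N E₁ E₂ σ₁ σ₂ = sInf (policyCosts α β Smax k N E₁ E₂ σ₁ σ₂) := rfl

theorem Feasible.cost_nonneg {w₁ w₂ c₁ c₂ d₁ d₂ x₁₂ x₂₁ s₁ s₂ : ℕ → ℝ}
    (hF : Feasible α β Smax k N E₁ E₂ σ₁ σ₂ w₁ w₂ c₁ c₂ d₁ d₂ x₁₂ x₂₁ s₁ s₂) :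
    0 ≤ ∑ t ∈ Icc k N, (w₁ t + w₂ t) :=
  sum_nonneg fun t ht => add_nonneg (hF.2.2.1 t ht).1 (hF.2.2.1 t ht).2.1

theorem policyCosts_bddBelow : BddBelow (policyCosts α β Smax k N E₁ E₂ σ₁ σ₂) := by
  refine ⟨0, ?_⟩
  rintro r ⟨w₁, w₂, c₁, c₂, d₁, d₂, x₁₂, x₂₁, s₁, s₂, hF, rfl⟩
  exact hF.cost_nonneg

theorem feasible_idle (hσ₁ : 0 ≤ σ₁ ∧ σ₁ ≤ Smax) (hσ₂ : 0 ≤ σ₂ ∧ σ₂ ≤ Smax) :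
    Feasible α β Smax k N E₁ E₂ σ₁ σ₂ (fun t => max 0 (-E₁ t)) (fun t => max 0 (-E₂ t))
      0 0 0 0 0 0 (fun _ => σ₁) (fun _ => σ₂) := by
  refine ⟨rfl, rfl, fun t _ => ?_, fun _ _ => ⟨hσ₁.1, hσ₁.2, hσ₂.1, hσ₂.2⟩⟩
  simp only [Pi.zero_apply, mul_zero, add_zero, sub_zero, le_refl, true_and]
  exact ⟨le_max_left _ _, le_max_left _ _, hσ₁.1, hσ₂.1,
    by linarith [le_max_right 0 (-E₁ t)], by linarith [le_max_right 0 (-E₂ t)]⟩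

theorem policyCosts_nonempty (hσ₁ : 0 ≤ σ₁ ∧ σ₁ ≤ Smax) (hσ₂ : 0 ≤ σ₂ ∧ σ₂ ≤ Smax) :
    (policyCosts α β Smax k N E₁ E₂ σ₁ σ₂).Nonempty :=
  ⟨_, _, _, _, _, _, _, _, _, _, _, feasible_idle hσ₁ hσ₂, rfl⟩

theorem Jstar_of_lt (hNk : N < k) (hσ₁ : 0 ≤ σ₁ ∧ σ₁ ≤ Smax) (hσ₂ : 0 ≤ σ₂ ∧ σ₂ ≤ Smax) :
    Jstar α β Smax k N E₁ E₂ σ₁ σ₂ = 0 := by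
  have hempty : Icc k N = ∅ := Icc_eq_empty_of_lt hNk
  suffices policyCosts α β Smax k N E₁ E₂ σ₁ σ₂ = {0} by
    rw [Jstar_eq_sInf_policyCosts, this, csInf_singleton]
  refine Set.eq_singleton_iff_unique_mem.2 ⟨?_, ?_⟩
  · exact ⟨_, _, _, _, _, _, _, _, _, _, feasible_idle hσ₁ hσ₂, by simp [hempty]⟩
  · rintro r ⟨w₁, w₂, c₁, c₂, d₁, d₂, x₁₂, x₂₁, s₁, s₂, -, rfl⟩
    simp [hempty]

theorem Feasible.tail {w₁ w₂ c₁ c₂ d₁ d₂ x₁₂ x₂₁ s₁ s₂ : ℕ → ℝ}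
    (hF : Feasible α β Smax k N E₁ E₂ σ₁ σ₂ w₁ w₂ c₁ c₂ d₁ d₂ x₁₂ x₂₁ s₁ s₂) :
    Feasible α β Smax (k + 1) N E₁ E₂ (s₁ (k + 1)) (s₂ (k + 1))
      w₁ w₂ c₁ c₂ d₁ d₂ x₁₂ x₂₁ s₁ s₂ :=
  ⟨rfl, rfl, fun t ht => hF.2.2.1 t (Icc_subset_Icc_left k.le_succ ht),
    fun t ht => hF.2.2.2 t (Icc_subset_Icc_left k.le_succ ht)⟩

theorem Feasible.oneStep {w₁ w₂ c₁ c₂ d₁ d₂ x₁₂ x₂₁ s₁ s₂ : ℕ → ℝ}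
    (hF : Feasible α β Smax k N E₁ E₂ σ₁ σ₂ w₁ w₂ c₁ c₂ d₁ d₂ x₁₂ x₂₁ s₁ s₂) (hkN : k ≤ N) :
    OneStep α β Smax σ₁ σ₂ (E₁ k) (E₂ k) (w₁ k) (w₂ k) (c₁ k) (c₂ k) (d₁ k) (d₂ k)
        (x₁₂ k) (x₂₁ k) ∧
      s₁ (k + 1) = σ₁ + α * c₁ k - d₁ k ∧ s₂ (k + 1) = σ₂ + α * c₂ k - d₂ k := by
  obtain ⟨hs₁, hs₂, hstep, hbox⟩ := hF
  obtain ⟨h1, h2, h3, h4, h5, h6, h7, h8, h9, h10, h11, h12, h13, h14⟩ :=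
    hstep k (left_mem_Icc.2 hkN)
  obtain ⟨h15, h16, h17, h18⟩ := hbox (k + 1) (mem_Icc.2 ⟨k.le_succ, by omega⟩)
  subst hs₁ hs₂
  exact ⟨⟨h1, h2, h3, h4, h5, h6, h7, h8, h11, h12, h9 ▸ h15, h9 ▸ h16, h10 ▸ h17, h10 ▸ h18,
    h13, h14⟩, h9, h10⟩

theorem sum_Icc_eq_add_sum_Icc_succ {M : Type*} [AddCommMonoid M] (f : ℕ → M) (hkN : k ≤ N) :
    ∑ t ∈ Icc k N, f t = f k + ∑ t ∈ Icc (k + 1) N, f t := by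
  rw [Icc_add_one_left_eq_Ioc, add_sum_Ioc_eq_sum_Icc hkN]

theorem Feasible.cons {w₁ w₂ c₁ c₂ d₁ d₂ x₁₂ x₂₁ s₁ s₂ : ℕ → ℝ}
    {w₁' w₂' c₁' c₂' d₁' d₂' x₁₂' x₂₁' : ℝ}
    (hσ₁ : 0 ≤ σ₁ ∧ σ₁ ≤ Smax) (hσ₂ : 0 ≤ σ₂ ∧ σ₂ ≤ Smax)
    (ha : OneStep α β Smax σ₁ σ₂ (E₁ k) (E₂ k) w₁' w₂' c₁' c₂' d₁' d₂' x₁₂' x₂₁')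
    (hF : Feasible α β Smax (k + 1) N E₁ E₂ (σ₁ + α * c₁' - d₁') (σ₂ + α * c₂' - d₂')
      w₁ w₂ c₁ c₂ d₁ d₂ x₁₂ x₂₁ s₁ s₂) :
    Feasible α β Smax k N E₁ E₂ σ₁ σ₂ (update w₁ k w₁') (update w₂ k w₂')
      (update c₁ k c₁') (update c₂ k c₂') (update d₁ k d₁') (update d₂ k d₂')
      (update x₁₂ k x₁₂') (update x₂₁ k x₂₁') (update s₁ k σ₁) (update s₂ k σ₂) := by
  obtain ⟨hs₁, hs₂, hstep, hbox⟩ := hF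
  refine ⟨update_self .., update_self .., fun t ht => ?_, fun t ht => ?_⟩
  · rcases eq_or_ne t k with rfl | htk
    · obtain ⟨h1, h2, h3, h4, h5, h6, h7, h8, h9, h10, -, -, -, -, h15, h16⟩ := ha
      simp only [update_self, update_of_ne t.succ_ne_self]
      exact ⟨h1, h2, h3, h4, h5, h6, h7, h8, hs₁, hs₂, h9, h10, h15, h16⟩
    · obtain ⟨hkt, htN⟩ := mem_Icc.1 ht
      simp only [update_of_ne htk, update_of_ne (show t + 1 ≠ k by omega)]
      exact hstep t (mem_Icc.2 ⟨by omega, htN⟩)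
  · rcases eq_or_ne t k with rfl | htk
    · simp only [update_self]
      exact ⟨hσ₁.1, hσ₁.2, hσ₂.1, hσ₂.2⟩
    · obtain ⟨hkt, htN⟩ := mem_Icc.1 ht
      simp only [update_of_ne htk]
      exact hbox t (mem_Icc.2 ⟨by omega, htN⟩)

theorem Jstar_le_add (hkN : k ≤ N) (hσ₁ : 0 ≤ σ₁ ∧ σ₁ ≤ Smax) (hσ₂ : 0 ≤ σ₂ ∧ σ₂ ≤ Smax)
    {w₁ w₂ c₁ c₂ d₁ d₂ x₁₂ x₂₁ : ℝ}
    (ha : OneStep α β Smax σ₁ σ₂ (E₁ k) (E₂ k) w₁ w₂ c₁ c₂ d₁ d₂ x₁₂ x₂₁) :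
    Jstar α β Smax k N E₁ E₂ σ₁ σ₂ ≤
      w₁ + w₂ + Jstar α β Smax (k + 1) N E₁ E₂ (σ₁ + α * c₁ - d₁) (σ₂ + α * c₂ - d₂) := by
  rw [← sub_le_iff_le_add', Jstar_eq_sInf_policyCosts (k := k + 1)]
  refine le_csInf (policyCosts_nonempty ha.next_bounds.1 ha.next_bounds.2) ?_
  rintro r ⟨W₁, W₂, C₁, C₂, D₁, D₂, X₁₂, X₂₁, S₁, S₂, hF, rfl⟩
  rw [sub_le_iff_le_add']
  refine csInf_le policyCosts_bddBelow ⟨_, _, _, _, _, _, _, _, _, _, hF.cons hσ₁ hσ₂ ha, ?_⟩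
  rw [sum_Icc_eq_add_sum_Icc_succ _ hkN]
  simp only [update_self]
  congr 1
  refine sum_congr rfl fun t ht => ?_
  have htk : t ≠ k := by rw [mem_Icc] at ht; omega
  simp only [update_of_ne htk]

theorem le_Jstar (hkN : k ≤ N) (hσ₁ : 0 ≤ σ₁ ∧ σ₁ ≤ Smax) (hσ₂ : 0 ≤ σ₂ ∧ σ₂ ≤ Smax) {m : ℝ}
    (h : ∀ w₁ w₂ c₁ c₂ d₁ d₂ x₁₂ x₂₁ : ℝ,
      OneStep α β Smax σ₁ σ₂ (E₁ k) (E₂ k) w₁ w₂ c₁ c₂ d₁ d₂ x₁₂ x₂₁ →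
      m ≤ w₁ + w₂ + Jstar α β Smax (k + 1) N E₁ E₂ (σ₁ + α * c₁ - d₁) (σ₂ + α * c₂ - d₂)) :
    m ≤ Jstar α β Smax k N E₁ E₂ σ₁ σ₂ := by
  refine le_csInf (policyCosts_nonempty hσ₁ hσ₂) ?_
  rintro r ⟨w₁, w₂, c₁, c₂, d₁, d₂, x₁₂, x₂₁, s₁, s₂, hF, rfl⟩
  obtain ⟨ha, hs₁, hs₂⟩ := hF.oneStep hkN
  have htail : Jstar α β Smax (k + 1) N E₁ E₂ (s₁ (k + 1)) (s₂ (k + 1)) ≤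
      ∑ t ∈ Icc (k + 1) N, (w₁ t + w₂ t) :=
    csInf_le policyCosts_bddBelow ⟨_, _, _, _, _, _, _, _, _, _, hF.tail, rfl⟩
  rw [hs₁, hs₂] at htail
  rw [sum_Icc_eq_add_sum_Icc_succ _ hkN]
  linarith [h _ _ _ _ _ _ _ _ ha]

end Bellman

/-- Energy the storages can deliver to BS 2: `α s₂` from its own storage and `α β s₁` from
BS 1's storage through a transfer. -/
def level (α β s₁ s₂ : ℝ) : ℝ := α * β * s₁ + α * s₂

/-- Level after one greedy slot with net energy `C = β E₁ + E₂` seen from BS 2: a deficit is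
served from storage first, a surplus is stored at the price of losing a factor `α` twice
(charging, then discharging), up to the full level `Θ`. -/
noncomputable def nextLevel (α Θ C θ : ℝ) : ℝ :=
  if 0 ≤ C then min Θ (max 0 (θ + α ^ 2 * C)) else max 0 (θ + C)

/-- Grid draw of the modified greedy policy over the `n` slots `t, …, t + n - 1`. -/
noncomputable def greedyCost (α Θ : ℝ) (C : ℕ → ℝ) : ℕ → ℕ → ℝ → ℝ
  | _, 0, _ => 0
  | t, n + 1, θ => max 0 (-(θ + C t)) + greedyCost α Θ C (t + 1) n (nextLevel α Θ (C t) θ)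

section GreedyCost

variable {α Θ c : ℝ} {C : ℕ → ℝ}

theorem nextLevel_mono : Monotone (nextLevel α Θ c) := by
  intro θ θ' h
  unfold nextLevel
  split_ifs <;> gcongr

theorem monotone_shortfall_add_sub_nextLevel (hα : α ^ 2 ≤ 1) :
    Monotone fun θ => max 0 (-(θ + c)) + θ - nextLevel α Θ c θ := by
  intro θ θ' h
  unfold nextLevel
  split_ifs with hc
  · have : α ^ 2 * c ≤ c := mul_le_of_le_one_left hc hα
    simp only [max_def, min_def]
    split_ifs <;> linarith
  · simp only [max_def]
    split_ifs <;> linarith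

theorem greedyCost_antitone (t n : ℕ) : Antitone (greedyCost α Θ C t n) := by
  induction n generalizing t with
  | zero => exact antitone_const
  | succ n ih =>
    intro θ θ' h
    exact add_le_add (max_le_max le_rfl (by linarith)) (ih _ (nextLevel_mono h))

theorem greedyCost_add_monotone (hα : α ^ 2 ≤ 1) (t n : ℕ) :
    Monotone fun θ => greedyCost α Θ C t n θ + θ := by
  induction n generalizing t with
  | zero => exact fun θ θ' h => by simpa [greedyCost] using h
  | succ n ih =>
    intro θ θ' h
    have hstep := monotone_shortfall_add_sub_nextLevel (Θ := Θ) (c := C t) hα h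
    have htail := ih (t + 1) (nextLevel_mono (α := α) (Θ := Θ) (c := C t) h)
    simp only [greedyCost] at hstep htail ⊢
    linarith

end GreedyCost

section OneStep

variable {α β Smax σ₁ σ₂ E₁ E₂ w₁ w₂ c₁ c₂ d₁ d₂ x₁₂ x₂₁ : ℝ}

theorem level_nonneg (hα : 0 ≤ α) (hβ : 0 ≤ β) (h₁ : 0 ≤ σ₁) (h₂ : 0 ≤ σ₂) :
    0 ≤ level α β σ₁ σ₂ := by
  unfold level; positivity

theorem level_le_level {σ₁' σ₂' : ℝ} (hα : 0 ≤ α) (hβ : 0 ≤ β) (h₁ : σ₁ ≤ σ₁') (h₂ : σ₂ ≤ σ₂') :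
    level α β σ₁ σ₂ ≤ level α β σ₁' σ₂' := by
  unfold level; gcongr

/-- Add `β` times the balance at BS 1 to the balance at BS 2; the losses `α, β ≤ 1` only help. -/
theorem OneStep.level_next_le (hα : 0 ≤ α) (hα1 : α ≤ 1) (hβ : 0 ≤ β) (hβ1 : β ≤ 1)
    (h : OneStep α β Smax σ₁ σ₂ E₁ E₂ w₁ w₂ c₁ c₂ d₁ d₂ x₁₂ x₂₁) :
    level α β (σ₁ + α * c₁ - d₁) (σ₂ + α * c₂ - d₂) ≤
      level α β σ₁ σ₂ + (β * E₁ + E₂) + (w₁ + w₂) := by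
  obtain ⟨hw₁, -, hc₁, hc₂, -, -, -, hx₂₁, -, -, -, -, -, -, hb₁, hb₂⟩ := h
  unfold level
  nlinarith [mul_nonneg hβ hb₁, mul_nonneg (sub_nonneg.2 hβ1) hw₁,
    mul_nonneg (mul_nonneg (sub_nonneg.2 hα1) (by linarith : (0 : ℝ) ≤ 1 + α)) hc₂,
    mul_nonneg (mul_nonneg (mul_nonneg hβ (sub_nonneg.2 hα1)) (by linarith : (0 : ℝ) ≤ 1 + α)) hc₁,
    mul_nonneg (mul_nonneg (sub_nonneg.2 hβ1) (by linarith : (0 : ℝ) ≤ 1 + β)) hx₂₁]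

/-- Scale the combination of balances of `OneStep.level_next_le` by `α²`. -/
theorem OneStep.level_next_le_sq_mul (hα : 0 ≤ α) (hα1 : α ≤ 1) (hβ : 0 ≤ β) (hβ1 : β ≤ 1)
    (h : OneStep α β Smax σ₁ σ₂ E₁ E₂ w₁ w₂ c₁ c₂ d₁ d₂ x₁₂ x₂₁) :
    level α β (σ₁ + α * c₁ - d₁) (σ₂ + α * c₂ - d₂) ≤
      level α β σ₁ σ₂ + α ^ 2 * (β * E₁ + E₂) + (w₁ + w₂) := by
  obtain ⟨hw₁, hw₂, -, -, hd₁, hd₂, -, hx₂₁, -, -, -, -, -, -, hb₁, hb₂⟩ := h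
  have ha2 : α ^ 2 ≤ 1 := pow_le_one₀ hα hα1
  unfold level
  nlinarith [mul_nonneg (mul_nonneg (mul_nonneg hα hα) hβ) hb₁,
    mul_nonneg (mul_nonneg hα hα) hb₂,
    mul_nonneg (sub_nonneg.2 (by nlinarith : α ^ 2 * β ≤ 1)) hw₁,
    mul_nonneg (sub_nonneg.2 ha2) hw₂,
    mul_nonneg (mul_nonneg (mul_nonneg hα hβ) hd₁) (sub_nonneg.2 ha2),
    mul_nonneg (mul_nonneg hα hd₂) (sub_nonneg.2 ha2),
    mul_nonneg (mul_nonneg (mul_nonneg hα hα) (sub_nonneg.2 (by nlinarith : β ^ 2 ≤ 1))) hx₂₁]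

variable (hα : 0 ≤ α) (hα1 : α ≤ 1) (hβ : 0 ≤ β) (hβ1 : β ≤ 1)
  (hσ₁ : 0 ≤ σ₁ ∧ σ₁ ≤ Smax) (hσ₂ : 0 ≤ σ₂ ∧ σ₂ ≤ Smax)
  (h : OneStep α β Smax σ₁ σ₂ E₁ E₂ w₁ w₂ c₁ c₂ d₁ d₂ x₁₂ x₂₁)
include hα hα1 hβ hβ1 h

theorem OneStep.shortfall_le :
    max 0 (-(level α β σ₁ σ₂ + (β * E₁ + E₂))) ≤ w₁ + w₂ := by
  obtain ⟨⟨h₁₀, -⟩, h₂₀, -⟩ := h.next_bounds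
  have := h.level_next_le hα hα1 hβ hβ1
  exact max_le (by linarith [h.1, h.2.1]) (by linarith [level_nonneg hα hβ h₁₀ h₂₀])

include hσ₁ hσ₂ in
theorem OneStep.shortfall_add_level_sub_nextLevel_le :
    max 0 (-(level α β σ₁ σ₂ + (β * E₁ + E₂))) +
        level α β (σ₁ + α * c₁ - d₁) (σ₂ + α * c₂ - d₂) -
        nextLevel α (level α β Smax Smax) (β * E₁ + E₂) (level α β σ₁ σ₂) ≤ w₁ + w₂ := by
  have hθ := level_nonneg hα hβ hσ₁.1 hσ₂.1
  obtain ⟨⟨-, h₁S⟩, -, h₂S⟩ := h.next_bounds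
  have hΘ := level_le_level hα hβ h₁S h₂S
  have h₁ := h.level_next_le hα hα1 hβ hβ1
  have h₂ := h.level_next_le_sq_mul hα hα1 hβ hβ1
  have hw := h.shortfall_le hα hα1 hβ hβ1
  unfold nextLevel
  split_ifs with hc
  · simp only [max_def, min_def] at hw ⊢
    split_ifs at hw ⊢ <;> linarith
  · simp only [max_def] at hw ⊢
    split_ifs at hw ⊢ <;> linarith

include hσ₁ hσ₂ in
/-- Exchange argument: a value function `G` that is antitone and `1`-Lipschitz cannot make up
for a step that beats the greedy level. -/
theorem OneStep.shortfall_add_le_add {G : ℝ → ℝ} (hG : Antitone G)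
    (hG' : Monotone fun θ => G θ + θ) :
    max 0 (-(level α β σ₁ σ₂ + (β * E₁ + E₂))) +
        G (nextLevel α (level α β Smax Smax) (β * E₁ + E₂) (level α β σ₁ σ₂)) ≤
      w₁ + w₂ + G (level α β (σ₁ + α * c₁ - d₁) (σ₂ + α * c₂ - d₂)) := by
  have hw := h.shortfall_le hα hα1 hβ hβ1
  have hw' := h.shortfall_add_level_sub_nextLevel_le hα hα1 hβ hβ1 hσ₁ hσ₂
  rcases le_total (level α β (σ₁ + α * c₁ - d₁) (σ₂ + α * c₂ - d₂))
    (nextLevel α (level α β Smax Smax) (β * E₁ + E₂) (level α β σ₁ σ₂)) with hle | hle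
  · linarith [hG hle]
  · linarith [hG' hle]

end OneStep

section Greedy

variable {α β Smax σ₁ σ₂ E₁ E₂ p : ℝ}

theorem oneStep_discharge (hα : 0 ≤ α) (hp0 : 0 ≤ p) (hp1 : p ≤ 1)
    (hσ₁ : 0 ≤ σ₁ ∧ σ₁ ≤ Smax) (hσ₂ : 0 ≤ σ₂ ∧ σ₂ ≤ Smax) (hE₁ : 0 ≤ E₁)
    (hdef : β * E₁ + E₂ + p * level α β σ₁ σ₂ ≤ 0) :
    OneStep α β Smax σ₁ σ₂ E₁ E₂ 0 (-(β * E₁ + E₂ + p * level α β σ₁ σ₂)) 0 0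
      (p * σ₁) (p * σ₂) (E₁ + α * (p * σ₁)) 0 := by
  have h₁ : p * σ₁ ≤ σ₁ := mul_le_of_le_one_left hσ₁.1 hp1
  have h₂ : p * σ₂ ≤ σ₂ := mul_le_of_le_one_left hσ₂.1 hp1
  have hd₁ : 0 ≤ p * σ₁ := mul_nonneg hp0 hσ₁.1
  have hd₂ : 0 ≤ p * σ₂ := mul_nonneg hp0 hσ₂.1
  unfold level at hdef ⊢
  refine ⟨le_rfl, by linarith, le_rfl, le_rfl, hd₁, hd₂, add_nonneg hE₁ (mul_nonneg hα hd₁), le_rfl,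
    h₁, h₂, by linarith, by linarith, by linarith, by linarith, by linarith, by linarith⟩

theorem level_discharge :
    level α β (σ₁ + α * 0 - p * σ₁) (σ₂ + α * 0 - p * σ₂) = (1 - p) * level α β σ₁ σ₂ := by
  unfold level; ring

/-- Charge the fraction `p` of both free capacities out of BS 1's surplus, which also covers
BS 2's deficit through a transfer. -/
theorem oneStep_charge (hα : 0 < α) (hβ : 0 < β) (hp0 : 0 ≤ p) (hp1 : p ≤ 1)
    (hσ₁ : 0 ≤ σ₁ ∧ σ₁ ≤ Smax) (hσ₂ : 0 ≤ σ₂ ∧ σ₂ ≤ Smax) (hE₂ : E₂ ≤ 0)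
    (hsur : p * (level α β Smax Smax - level α β σ₁ σ₂) ≤ α ^ 2 * (β * E₁ + E₂)) :
    OneStep α β Smax σ₁ σ₂ E₁ E₂ 0 0 (p * (Smax - σ₁) / α) (p * (Smax - σ₂) / α) 0 0
      ((p * (Smax - σ₂) / α - E₂) / β) 0 := by
  have h₁ : α * (p * (Smax - σ₁) / α) = p * (Smax - σ₁) := by field_simp
  have h₂ : α * (p * (Smax - σ₂) / α) = p * (Smax - σ₂) := by field_simp
  have hd₁ : 0 ≤ p * (Smax - σ₁) := mul_nonneg hp0 (by linarith)
  have hd₂ : 0 ≤ p * (Smax - σ₂) := mul_nonneg hp0 (by linarith)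
  have hb₁ : E₁ + 0 - p * (Smax - σ₁) / α + α * 0 - (p * (Smax - σ₂) / α - E₂) / β + β * 0 =
      (α ^ 2 * (β * E₁ + E₂) - p * (level α β Smax Smax - level α β σ₁ σ₂)) / (α ^ 2 * β) := by
    unfold level; field_simp; ring
  refine ⟨le_rfl, le_rfl, by positivity, by positivity, le_rfl, le_rfl,
    div_nonneg (by linarith [div_nonneg hd₂ hα.le]) hβ.le, le_rfl, hσ₁.1, hσ₂.1,
    by linarith, by nlinarith, by linarith, by nlinarith, ?_, ?_⟩
  · rw [hb₁]; exact div_nonneg (by linarith) (by positivity)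
  · field_simp; linarith

theorem level_charge (hα : 0 < α) :
    level α β (σ₁ + α * (p * (Smax - σ₁) / α) - 0) (σ₂ + α * (p * (Smax - σ₂) / α) - 0) =
      level α β σ₁ σ₂ + p * (level α β Smax Smax - level α β σ₁ σ₂) := by
  unfold level; field_simp; ring

end Greedy

section Optimality

variable {α β Smax σ₁ σ₂ E₁ E₂ : ℝ}

theorem exists_greedy_action (hα : 0 < α) (hβ : 0 < β) (hσ₁ : 0 ≤ σ₁ ∧ σ₁ ≤ Smax)
    (hσ₂ : 0 ≤ σ₂ ∧ σ₂ ≤ Smax) (hE₁ : 0 ≤ E₁) (hE₂ : E₂ ≤ 0) :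
    ∃ w₁ w₂ c₁ c₂ d₁ d₂ x₁₂ x₂₁ : ℝ,
      OneStep α β Smax σ₁ σ₂ E₁ E₂ w₁ w₂ c₁ c₂ d₁ d₂ x₁₂ x₂₁ ∧
      w₁ + w₂ = max 0 (-(level α β σ₁ σ₂ + (β * E₁ + E₂))) ∧
      level α β (σ₁ + α * c₁ - d₁) (σ₂ + α * c₂ - d₂) =
        nextLevel α (level α β Smax Smax) (β * E₁ + E₂) (level α β σ₁ σ₂) := by
  have hθ := level_nonneg hα.le hβ.le hσ₁.1 hσ₂.1
  have hθΘ := level_le_level hα.le hβ.le hσ₁.2 hσ₂.2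
  set θ := level α β σ₁ σ₂
  set Θ := level α β Smax Smax
  set C := β * E₁ + E₂
  rcases le_or_gt 0 C with hC | hC
  · have hαC : 0 ≤ α ^ 2 * C := by positivity
    rcases le_or_gt (Θ - θ) (α ^ 2 * C) with hfull | hpart
    · refine ⟨_, _, _, _, _, _, _, _,
        oneStep_charge hα hβ zero_le_one le_rfl hσ₁ hσ₂ hE₂ (by linarith), ?_, ?_⟩
      · rw [max_eq_left (by linarith)]; ring
      · rw [level_charge hα, nextLevel, if_pos hC, max_eq_right (by linarith),
          min_eq_left (by linarith)]
        ring
    · have hp : α ^ 2 * C / (Θ - θ) * (Θ - θ) = α ^ 2 * C :=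
        div_mul_cancel₀ _ (by linarith)
      refine ⟨_, _, _, _, _, _, _, _,
        oneStep_charge hα hβ (div_nonneg hαC (by linarith))
          ((div_le_one₀ (show 0 < Θ - θ by linarith)).2 hpart.le) hσ₁ hσ₂ hE₂ hp.le, ?_, ?_⟩
      · rw [max_eq_left (by linarith)]; ring
      · rw [level_charge hα, hp, nextLevel, if_pos hC, max_eq_right (by linarith),
          min_eq_right (by linarith)]
  · rcases le_or_gt (θ + C) 0 with hdrain | hpart
    · refine ⟨_, _, _, _, _, _, _, _,
        oneStep_discharge hα.le zero_le_one le_rfl hσ₁ hσ₂ hE₁ (by linarith), ?_, ?_⟩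
      · rw [max_eq_right (by linarith)]; ring
      · rw [level_discharge, nextLevel, if_neg hC.not_ge, max_eq_left hdrain]; ring
    · have hp : -C / θ * θ = -C := div_mul_cancel₀ _ (by linarith)
      refine ⟨_, _, _, _, _, _, _, _,
        oneStep_discharge (p := -C / θ) hα.le (div_nonneg (by linarith) hθ)
          ((div_le_one₀ (show 0 < θ by linarith)).2 (by linarith)) hσ₁ hσ₂ hE₁ (by linarith),
          ?_, ?_⟩
      · rw [hp, max_eq_left (by linarith)]; ring
      · rw [level_discharge, nextLevel, if_neg hC.not_ge, max_eq_right hpart.le, sub_mul, hp]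
        ring

theorem V1_eq_max (hα : 0 < α) (hα1 : α ≤ 1) (hβ : 0 < β) (hβ1 : β ≤ 1)
    (hσ₁ : 0 ≤ σ₁ ∧ σ₁ ≤ Smax) (hσ₂ : 0 ≤ σ₂ ∧ σ₂ ≤ Smax) (hE₁ : 0 ≤ E₁) (hE₂ : E₂ ≤ 0) :
    V1 α β Smax σ₁ σ₂ E₁ E₂ = max 0 (-(level α β σ₁ σ₂ + (β * E₁ + E₂))) := by
  obtain ⟨w₁, w₂, c₁, c₂, d₁, d₂, x₁₂, x₂₁, ha, hw, -⟩ :=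
    exists_greedy_action hα hβ hσ₁ hσ₂ hE₁ hE₂
  refine IsLeast.csInf_eq ⟨⟨w₁, w₂, c₁, c₂, d₁, d₂, x₁₂, x₂₁, ha, hw⟩, ?_⟩
  rintro r ⟨w₁, w₂, c₁, c₂, d₁, d₂, x₁₂, x₂₁, ha, rfl⟩
  exact ha.shortfall_le hα.le hα1 hβ.le hβ1

theorem Jstar_eq_greedyCost {k N : ℕ} {E₁ E₂ : ℕ → ℝ} (hα : 0 < α) (hα1 : α ≤ 1) (hβ : 0 < β)
    (hβ1 : β ≤ 1) (hE₁ : ∀ t ∈ Icc k N, 0 ≤ E₁ t) (hE₂ : ∀ t ∈ Icc k N, E₂ t ≤ 0)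
    (n t : ℕ) (hkt : k ≤ t) (htn : t + n = N + 1)
    (hσ₁ : 0 ≤ σ₁ ∧ σ₁ ≤ Smax) (hσ₂ : 0 ≤ σ₂ ∧ σ₂ ≤ Smax) :
    Jstar α β Smax t N E₁ E₂ σ₁ σ₂ =
      greedyCost α (level α β Smax Smax) (fun t => β * E₁ t + E₂ t) t n (level α β σ₁ σ₂) := by
  induction n generalizing t σ₁ σ₂ with
  | zero => exact Jstar_of_lt (by omega) hσ₁ hσ₂
  | succ n ih =>
    have htN : t ≤ N := by omega
    have ht : t ∈ Icc k N := mem_Icc.2 ⟨hkt, htN⟩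
    simp only [greedyCost]
    refine le_antisymm ?_ (le_Jstar htN hσ₁ hσ₂ fun w₁ w₂ c₁ c₂ d₁ d₂ x₁₂ x₂₁ ha => ?_)
    · obtain ⟨w₁, w₂, c₁, c₂, d₁, d₂, x₁₂, x₂₁, ha, hw, hlevel⟩ :=
        exists_greedy_action hα hβ hσ₁ hσ₂ (hE₁ t ht) (hE₂ t ht)
      calc Jstar α β Smax t N E₁ E₂ σ₁ σ₂
          ≤ w₁ + w₂ + Jstar α β Smax (t + 1) N E₁ E₂ (σ₁ + α * c₁ - d₁) (σ₂ + α * c₂ - d₂) :=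
            Jstar_le_add htN hσ₁ hσ₂ ha
        _ = _ := by
          rw [hw, ih (t + 1) (by omega) (by omega) ha.next_bounds.1 ha.next_bounds.2, hlevel]
    · rw [ih (t + 1) (by omega) (by omega) ha.next_bounds.1 ha.next_bounds.2]
      exact ha.shortfall_add_le_add hα.le hα1 hβ.le hβ1 hσ₁ hσ₂ (greedyCost_antitone _ _)
        (greedyCost_add_monotone (pow_le_one₀ hα.le hα1) _ _)

end Optimality

theorem modified_greedy_optimal_general
    (α β Smax : ℝ) (hα : 0 < α ∧ α ≤ 1) (hβ : 0 < β ∧ β ≤ 1)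
    (k N : ℕ) (hkN : k ≤ N) (E₁ E₂ : ℕ → ℝ)
    (hE₁ : ∀ t ∈ Finset.Icc k N, 0 ≤ E₁ t)
    (hE₂ : ∀ t ∈ Finset.Icc k N, E₂ t ≤ 0)
    (σ₁ σ₂ : ℝ) (hσ₁ : 0 ≤ σ₁ ∧ σ₁ ≤ Smax) (hσ₂ : 0 ≤ σ₂ ∧ σ₂ ≤ Smax) :
    ∃ w₁ w₂ c₁ c₂ d₁ d₂ x₁₂ x₂₁ : ℝ,
      OneStep α β Smax σ₁ σ₂ (E₁ k) (E₂ k) w₁ w₂ c₁ c₂ d₁ d₂ x₁₂ x₂₁ ∧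
      w₁ + w₂ = V1 α β Smax σ₁ σ₂ (E₁ k) (E₂ k) ∧
      Jstar α β Smax k N E₁ E₂ σ₁ σ₂ =
        V1 α β Smax σ₁ σ₂ (E₁ k) (E₂ k) +
          Jstar α β Smax (k + 1) N E₁ E₂ (σ₁ + α * c₁ - d₁) (σ₂ + α * c₂ - d₂) := by
  obtain ⟨hα0, hα1⟩ := hα
  obtain ⟨hβ0, hβ1⟩ := hβ
  have hk : k ∈ Icc k N := left_mem_Icc.2 hkN
  obtain ⟨w₁, w₂, c₁, c₂, d₁, d₂, x₁₂, x₂₁, ha, hw, hlevel⟩ :=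
    exists_greedy_action hα0 hβ0 hσ₁ hσ₂ (hE₁ k hk) (hE₂ k hk)
  have hV := V1_eq_max hα0 hα1 hβ0 hβ1 hσ₁ hσ₂ (hE₁ k hk) (hE₂ k hk)
  refine ⟨w₁, w₂, c₁, c₂, d₁, d₂, x₁₂, x₂₁, ha, hw.trans hV.symm, ?_⟩
  rw [Jstar_eq_greedyCost hα0 hα1 hβ0 hβ1 hE₁ hE₂ (N - k + 1) k le_rfl (by omega) hσ₁ hσ₂,
    Jstar_eq_greedyCost hα0 hα1 hβ0 hβ1 hE₁ hE₂ (N - k) (k + 1) k.le_succ (by omega)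
      ha.next_bounds.1 ha.next_bounds.2, hV, hlevel]
  rfl

/-- Proposition 6: optimality of the modified greedy policy when BS 1
is always in surplus and BS 2 always in deficit. -/
theorem modified_greedy_optimal
    (α β Smax : ℝ) (hα : 0 < α ∧ α ≤ 1) (hβ : 0 < β ∧ β ≤ 1) (hS : 0 < Smax)
    (k N : ℕ) (hkN : k ≤ N) (E₁ E₂ : ℕ → ℝ)
    (hE₁ : ∀ t ∈ Finset.Icc k N, 0 ≤ E₁ t)
    (hE₂ : ∀ t ∈ Finset.Icc k N, E₂ t ≤ 0)
    (σ₁ σ₂ : ℝ) (hσ₁ : 0 ≤ σ₁ ∧ σ₁ ≤ Smax) (hσ₂ : 0 ≤ σ₂ ∧ σ₂ ≤ Smax) :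
    ∃ w₁ w₂ c₁ c₂ d₁ d₂ x₁₂ x₂₁ : ℝ,
      OneStep α β Smax σ₁ σ₂ (E₁ k) (E₂ k) w₁ w₂ c₁ c₂ d₁ d₂ x₁₂ x₂₁ ∧
      w₁ + w₂ = V1 α β Smax σ₁ σ₂ (E₁ k) (E₂ k) ∧
      Jstar α β Smax k N E₁ E₂ σ₁ σ₂ =
        V1 α β Smax σ₁ σ₂ (E₁ k) (E₂ k) +
          Jstar α β Smax (k + 1) N E₁ E₂ (σ₁ + α * c₁ - d₁) (σ₂ + α * c₂ - d₂) :=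
  modified_greedy_optimal_general α β Smax hα hβ k N hkN E₁ E₂ hE₁ hE₂ σ₁ σ₂ hσ₁ hσ₂
end

section
/- (Case 2.4 of the greedy algorithm: surplus at BS 1 exceeds both its own residual storage capacity and BS 2's deficit.) Suppose 0 < α ≤ 1, 0 < β ≤ 1, (s₁,s₂) ∈ [0,S_max]², E₁ ≥ 0 > E₂, and −E₂ < β·(E₁ − (S_max − s₁)/α). Then the one-step minimal grid draw is V₁(s₁,s₂,E₁,E₂) = 0, and the supremum of the next-state storage sum (s₁ + α·c₁ − d₁) + (s₂ + α·c₂ − d₂) over one-step feasible actions with grid draw 0 equals S_max + min{S_max, s₂ + α·(β·(E₁ − (S_max − s₁)/α) + E₂)}. -/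
def zeroDrawStorageSums (α β Smax s₁ s₂ E₁ E₂ : ℝ) : Set ℝ :=
  {r : ℝ | ∃ w₁ w₂ c₁ c₂ d₁ d₂ x₁₂ x₂₁ : ℝ,
    OneStep α β Smax s₁ s₂ E₁ E₂ w₁ w₂ c₁ c₂ d₁ d₂ x₁₂ x₂₁ ∧
    w₁ + w₂ = 0 ∧
    (s₁ + α * c₁ - d₁) + (s₂ + α * c₂ - d₂) = r}

variable {α β Smax s₁ s₂ E₁ E₂ w₁ w₂ c₁ c₂ d₁ d₂ x₁₂ x₂₁ : ℝ}

lemma OneStep.grid_draw_nonneg (h : OneStep α β Smax s₁ s₂ E₁ E₂ w₁ w₂ c₁ c₂ d₁ d₂ x₁₂ x₂₁) :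
    0 ≤ w₁ + w₂ :=
  add_nonneg h.1 h.2.1

lemma OneStep.eq_zero_of_grid_draw_eq_zero
    (h : OneStep α β Smax s₁ s₂ E₁ E₂ w₁ w₂ c₁ c₂ d₁ d₂ x₁₂ x₂₁) (hw : w₁ + w₂ = 0) :
    w₁ = 0 ∧ w₂ = 0 :=
  (add_eq_zero_iff_of_nonneg h.1 h.2.1).1 hw

lemma V1_eq_zero_of_oneStep (h : OneStep α β Smax s₁ s₂ E₁ E₂ 0 0 c₁ c₂ d₁ d₂ x₁₂ x₂₁) :
    V1 α β Smax s₁ s₂ E₁ E₂ = 0 := by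
  refine IsLeast.csInf_eq ⟨⟨0, 0, c₁, c₂, d₁, d₂, x₁₂, x₂₁, h, add_zero 0⟩, ?_⟩
  rintro r ⟨w₁, w₂, c₁, c₂, d₁, d₂, x₁₂, x₂₁, hr, rfl⟩
  exact hr.grid_draw_nonneg

lemma OneStep.next_storage_sum_le (hα₀ : 0 < α) (hα₁ : α ≤ 1) (hβ₀ : 0 ≤ β) (hβ₁ : β ≤ 1)
    (h : OneStep α β Smax s₁ s₂ E₁ E₂ 0 0 c₁ c₂ d₁ d₂ x₁₂ x₂₁) :
    (s₁ + α * c₁ - d₁) + (s₂ + α * c₂ - d₂) ≤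
      Smax + min Smax (s₂ + α * (β * (E₁ - (Smax - s₁) / α) + E₂)) := by
  obtain ⟨-, -, -, -, hd₁, hd₂, -, hx₂₁, -, -, -, hn₁, -, hn₂, hb₁, hb₂⟩ := h
  have hαT : α * (β * (E₁ - (Smax - s₁) / α) + E₂) = α * β * E₁ - β * (Smax - s₁) + α * E₂ := by
    field_simp
  rw [← min_add_add_left, hαT]
  refine le_min (by linarith) ?_
  have hα2 : 0 ≤ 1 - α ^ 2 := by nlinarith
  have hβ2 : 0 ≤ 1 - β ^ 2 := by nlinarith
  have hroom : 0 ≤ (1 - β) * (Smax - (s₁ + α * c₁ - d₁)) := mul_nonneg (by linarith) (by linarith)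
  linear_combination mul_nonneg (mul_nonneg hα₀.le hβ₀) hb₁ + mul_nonneg hα₀.le hb₂ + hroom +
    mul_nonneg (mul_nonneg hβ₀ hα2) hd₁ + mul_nonneg hα2 hd₂ +
    mul_nonneg (mul_nonneg hα₀.le hβ2) hx₂₁

lemma oneStep_greedy (hα₀ : 0 < α) (hs₁ : 0 ≤ s₁ ∧ s₁ ≤ Smax) (hs₂ : 0 ≤ s₂)
    (hK : (Smax - s₁) / α ≤ E₁) (hc₂ : 0 ≤ c₂)
    (hc₂T : c₂ ≤ β * (E₁ - (Smax - s₁) / α) + E₂) (hc₂S : s₂ + α * c₂ ≤ Smax) :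
    OneStep α β Smax s₁ s₂ E₁ E₂ 0 0 ((Smax - s₁) / α) c₂ 0 0 (E₁ - (Smax - s₁) / α) 0 := by
  have hαK : α * ((Smax - s₁) / α) = Smax - s₁ := mul_div_cancel₀ _ hα₀.ne'
  have hαc₂ : 0 ≤ α * c₂ := mul_nonneg hα₀.le hc₂
  refine ⟨le_rfl, le_rfl, div_nonneg (by linarith) hα₀.le, hc₂, le_rfl, le_rfl, by linarith,
    le_rfl, hs₁.1, hs₂, ?_, ?_, ?_, ?_, ?_, ?_⟩ <;> linarith

lemma greedy_storage_sum (hα₀ : 0 < α) (T : ℝ) :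
    (s₁ + α * ((Smax - s₁) / α) - 0) + (s₂ + α * min ((Smax - s₂) / α) T - 0) =
      Smax + min Smax (s₂ + α * T) := by
  rw [mul_min_of_nonneg _ _ hα₀.le, mul_div_cancel₀ _ hα₀.ne', mul_div_cancel₀ _ hα₀.ne',
    ← min_add_add_left]
  ring_nf

lemma isGreatest_zeroDrawStorageSums (hα₀ : 0 < α) (hα₁ : α ≤ 1) (hβ₀ : 0 < β) (hβ₁ : β ≤ 1)
    (hs₁ : 0 ≤ s₁ ∧ s₁ ≤ Smax) (hs₂ : 0 ≤ s₂ ∧ s₂ ≤ Smax) (hE₂ : E₂ < 0)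
    (hsur : -E₂ < β * (E₁ - (Smax - s₁) / α)) :
    IsGreatest (zeroDrawStorageSums α β Smax s₁ s₂ E₁ E₂)
      (Smax + min Smax (s₂ + α * (β * (E₁ - (Smax - s₁) / α) + E₂))) := by
  set T := β * (E₁ - (Smax - s₁) / α) + E₂
  have hK : (Smax - s₁) / α ≤ E₁ := by
    linarith [pos_of_mul_pos_right (by linarith : 0 < β * (E₁ - (Smax - s₁) / α)) hβ₀.le]
  have hc₂ : 0 ≤ min ((Smax - s₂) / α) T :=
    le_min (div_nonneg (by linarith) hα₀.le) (by linarith)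
  have hc₂S : s₂ + α * min ((Smax - s₂) / α) T ≤ Smax := by
    linarith [mul_le_mul_of_nonneg_left (min_le_left ((Smax - s₂) / α) T) hα₀.le,
      mul_div_cancel₀ (Smax - s₂) hα₀.ne']
  refine ⟨⟨_, _, _, _, _, _, _, _, oneStep_greedy hα₀ hs₁ hs₂.1 hK hc₂ (min_le_right _ _) hc₂S,
    add_zero 0, greedy_storage_sum hα₀ T⟩, ?_⟩
  rintro r ⟨w₁, w₂, c₁, c₂, d₁, d₂, x₁₂, x₂₁, h, hw, rfl⟩
  obtain ⟨rfl, rfl⟩ := h.eq_zero_of_grid_draw_eq_zero hw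
  exact h.next_storage_sum_le hα₀ hα₁ hβ₀.le hβ₁

theorem case24_greedy_general
    (α β Smax : ℝ) (hα : 0 < α ∧ α ≤ 1) (hβ : 0 < β ∧ β ≤ 1)
    (s₁ s₂ : ℝ) (hs₁ : 0 ≤ s₁ ∧ s₁ ≤ Smax) (hs₂ : 0 ≤ s₂ ∧ s₂ ≤ Smax)
    (E₁ E₂ : ℝ) (hE₂ : E₂ < 0)
    (hsur : -E₂ < β * (E₁ - (Smax - s₁) / α)) :
    V1 α β Smax s₁ s₂ E₁ E₂ = 0 ∧
      sSup {r : ℝ | ∃ w₁ w₂ c₁ c₂ d₁ d₂ x₁₂ x₂₁ : ℝ,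
          OneStep α β Smax s₁ s₂ E₁ E₂ w₁ w₂ c₁ c₂ d₁ d₂ x₁₂ x₂₁ ∧
          w₁ + w₂ = 0 ∧
          (s₁ + α * c₁ - d₁) + (s₂ + α * c₂ - d₂) = r} =
        Smax + min Smax (s₂ + α * (β * (E₁ - (Smax - s₁) / α) + E₂)) := by
  have hmax := isGreatest_zeroDrawStorageSums hα.1 hα.2 hβ.1 hβ.2 hs₁ hs₂ hE₂ hsur
  obtain ⟨w₁, w₂, c₁, c₂, d₁, d₂, x₁₂, x₂₁, hstep, hw, -⟩ := hmax.1
  obtain ⟨rfl, rfl⟩ := hstep.eq_zero_of_grid_draw_eq_zero hw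
  exact ⟨V1_eq_zero_of_oneStep hstep, hmax.csSup_eq⟩

/-- Case 2.4: surplus at BS 1 exceeds both its residual storage
capacity and BS 2's deficit. -/
theorem case24_greedy
    (α β Smax : ℝ) (hα : 0 < α ∧ α ≤ 1) (hβ : 0 < β ∧ β ≤ 1) (hS : 0 < Smax)
    (s₁ s₂ : ℝ) (hs₁ : 0 ≤ s₁ ∧ s₁ ≤ Smax) (hs₂ : 0 ≤ s₂ ∧ s₂ ≤ Smax)
    (E₁ E₂ : ℝ) (hE₁ : 0 ≤ E₁) (hE₂ : E₂ < 0)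
    (hsur : -E₂ < β * (E₁ - (Smax - s₁) / α)) :
    V1 α β Smax s₁ s₂ E₁ E₂ = 0 ∧
      sSup {r : ℝ | ∃ w₁ w₂ c₁ c₂ d₁ d₂ x₁₂ x₂₁ : ℝ,
          OneStep α β Smax s₁ s₂ E₁ E₂ w₁ w₂ c₁ c₂ d₁ d₂ x₁₂ x₂₁ ∧
          w₁ + w₂ = 0 ∧
          (s₁ + α * c₁ - d₁) + (s₂ + α * c₂ - d₂) = r} =
        Smax + min Smax (s₂ + α * (β * (E₁ - (Smax - s₁) / α) + E₂)) :=
  case24_greedy_general α β Smax hα hβ s₁ s₂ hs₁ hs₂ E₁ E₂ hE₂ hsur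
end
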